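/- arXiv:1704.07035 — 2 statements merged into one kernel-verified Lean document; each statement's English description precedes it below -/
import Mathlib

section
/- Suppose x_N = M. Then the partition function evaluated at v_M = u_N satisfies the recursion W_{M,N}(u₁,…,u_N|v₁,…,v_M|x₁,…,x_N|a₁₂)|_{v_M = u_N} = ∏_{j=1}^{N−1} ([1 − u_j + u_N]/[1]) · ∏_{j=1}^{M−1} ([1 + u_N − v_j]/[1]) · W_{M−1,N−1}(u₁,…,u_{N−1}|v₁,…,v_{M−1}|x₁,…,x_{N−1}|a₁₂ + 1). -/
open Complex

noncomputable section

/-- The half period magnitude `K₁` for elliptic nome `q`. -/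
def Kone (q : ℝ) : ℝ :=
  Real.pi / 2 * ∏' n : ℕ,
    ((1 + q ^ (2 * n + 1)) / (1 - q ^ (2 * n + 1)) *
      ((1 - q ^ (2 * n + 2)) / (1 + q ^ (2 * n + 2)))) ^ 2

/-- The half period magnitude `K₂` for elliptic nome `q`. -/
def Ktwo (q : ℝ) : ℝ := -(Kone q / Real.pi) * Real.log q

/-- The elliptic theta function `H`. -/
def theta (q : ℝ) (u : ℂ) : ℂ :=
  2 * (q : ℂ) ^ (1 / 4 : ℂ) * Complex.sin (Real.pi * u / (2 * (Kone q : ℂ))) *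
    ∏' n : ℕ,
      ((1 - 2 * (q : ℂ) ^ (2 * n + 2) * Complex.cos (Real.pi * u / (Kone q : ℂ)) +
          (q : ℂ) ^ (4 * n + 4)) * (1 - (q : ℂ) ^ (2 * n + 2)))

/-- The bracket `[u] = H(λu)`. -/
def brak (q : ℝ) (lam : ℂ) (u : ℂ) : ℂ := theta q (lam * u)

/-- Unit vector ê₁. -/
def e1 : ℤ × ℤ := (1, 0)

/-- Unit vector ê₂. -/
def e2 : ℤ × ℤ := (0, 1)

/-- The scalar `a₁₂ = a₁ + a₂ + ω₁₂` attached to a state vector. -/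
def aSc (ω12 : ℂ) (a : ℤ × ℤ) : ℂ := (a.1 : ℂ) + (a.2 : ℂ) + ω12

/-- The face weights of the Deguchi-Martin model. -/
def faceW (q : ℝ) (lam ω12 : ℂ) (a b c d : ℤ × ℤ) (u v : ℂ) : ℂ :=
  if b = a + e1 ∧ c = a + e1 ∧ d = a + e1 + e1 then
    brak q lam (1 + (u - v)) / brak q lam 1
  else if b = a + e2 ∧ c = a + e2 ∧ d = a + e2 + e2 then
    brak q lam (1 - (u - v)) / brak q lam 1
  else if b = a + e2 ∧ c = a + e1 ∧ d = a + e1 + e2 then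
    brak q lam (u - v) * brak q lam (aSc ω12 a - 1) / (brak q lam 1 * brak q lam (aSc ω12 a))
  else if b = a + e1 ∧ c = a + e2 ∧ d = a + e1 + e2 then
    brak q lam (u - v) * brak q lam (-aSc ω12 a - 1) / (brak q lam 1 * brak q lam (-aSc ω12 a))
  else if b = a + e1 ∧ c = a + e1 ∧ d = a + e1 + e2 then
    brak q lam (aSc ω12 a - (u - v)) / brak q lam (aSc ω12 a)
  else if b = a + e2 ∧ c = a + e2 ∧ d = a + e1 + e2 then
    brak q lam (-aSc ω12 a - (u - v)) / brak q lam (-aSc ω12 a)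
  else 0

/-- Number of the integers `x₁ < ⋯ < x_N` that are `≤ k`. -/
def btmCount (N : ℕ) (x : ℕ → ℕ) (k : ℕ) : ℕ :=
  ((Finset.Icc 1 N).filter fun j => x j ≤ k).card

open scoped Classical in
/-- The partition function `W_{M,N}(u₁,…,u_N|v₁,…,v_M|x₁,…,x_N|a₁₂)` of the
Deguchi-Martin model: the sum over all state-vector configurations of the
`N`-row, `M`-column lattice with the prescribed boundary of the product of all
`M·N` face weights. -/
def partW (q : ℝ) (lam ω12 : ℂ) (M N : ℕ) (u v : ℕ → ℂ) (x : ℕ → ℕ)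
    (a : ℤ × ℤ) : ℂ :=
  ∑' s : Fin (N + 1) × Fin (M + 1) → ℤ × ℤ,
    if (∀ k : Fin (M + 1), s (0, k) = a + ((k : ℕ) : ℤ) • e1) ∧
       (∀ i : Fin (N + 1), s (i, 0) = a + ((i : ℕ) : ℤ) • e1) ∧
       (∀ i : Fin (N + 1), s (i, Fin.last M) = a + (M : ℤ) • e1 + ((i : ℕ) : ℤ) • e2) ∧
       (∀ k : Fin (M + 1), s (Fin.last N, k) =
          a + ((N : ℤ) + ((k : ℕ) : ℤ) - (btmCount N x (k : ℕ) : ℤ)) • e1 +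
            (btmCount N x (k : ℕ) : ℤ) • e2)
    then
      ∏ i : Fin N, ∏ k : Fin M,
        faceW q lam ω12 (s (i.castSucc, k.castSucc)) (s (i.castSucc, k.succ))
          (s (i.succ, k.castSucc)) (s (i.succ, k.succ)) (u (N - (i : ℕ))) (v ((k : ℕ) + 1))
    else 0

/-!
At `v_M = u_N` the top-right face has `u - v = 0`: its weight vanishes (factor `[0]`) unless
its lower-left state is `p + ê₁`, and then it is `[a₁₂]/[a₁₂] = 1`. From there the states
freeze leftwards along the top row (a face `p, p+ê₁, c, p+2ê₁` vanishes unless `c = p+ê₁`)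
and downwards along the right column (the same with `ê₂`). The frozen row contributes
`∏ [1 + u_N - v_j]/[1]`, the frozen column `∏ [1 - u_j + u_N]/[1]`, and the rest is a
configuration of the `(N-1) × (M-1)` lattice with corner `a⃗ + ê₁`; conversely every such
configuration extends by the frozen hook, so the two sums correspond term by term.
-/

lemma brak_zero (q : ℝ) (lam : ℂ) : brak q lam 0 = 0 := by
  simp [brak, theta]

lemma e1_ne_e2 : e1 ≠ e2 := by decide

section FaceWeights

variable {q : ℝ} {lam ω12 : ℂ} {b₁ b₂ b₃ b₄ p : ℤ × ℤ} {u v : ℂ}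

lemma faceW_e1_e1 (h₁ : b₁ = p) (h₂ : b₂ = p + e1) (h₃ : b₃ = p + e1) (h₄ : b₄ = p + e1 + e1) :
    faceW q lam ω12 b₁ b₂ b₃ b₄ u v = brak q lam (1 + (u - v)) / brak q lam 1 := by
  subst h₁ h₂ h₃ h₄
  exact if_pos ⟨rfl, rfl, rfl⟩

lemma faceW_e2_e2 (h₁ : b₁ = p) (h₂ : b₂ = p + e2) (h₃ : b₃ = p + e2) (h₄ : b₄ = p + e2 + e2) :
    faceW q lam ω12 b₁ b₂ b₃ b₄ u v = brak q lam (1 - (u - v)) / brak q lam 1 := by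
  subst h₁ h₂ h₃ h₄
  simp [faceW, e1_ne_e2.symm]

lemma faceW_e1_e2_of_eq (hA : brak q lam (aSc ω12 p) ≠ 0) (huv : u = v) (h₁ : b₁ = p)
    (h₂ : b₂ = p + e1) (h₃ : b₃ = p + e1) (h₄ : b₄ = p + e1 + e2) :
    faceW q lam ω12 b₁ b₂ b₃ b₄ u v = 1 := by
  subst huv h₁ h₂ h₃ h₄
  simp [faceW, e1_ne_e2, e1_ne_e2.symm, hA]

lemma faceW_e1_e1_eq_zero (h₁ : b₁ = p) (h₂ : b₂ = p + e1) (h₃ : b₃ ≠ p + e1)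
    (h₄ : b₄ = p + e1 + e1) : faceW q lam ω12 b₁ b₂ b₃ b₄ u v = 0 := by
  subst h₁ h₂ h₄
  simp [faceW, h₃, e1_ne_e2]

lemma faceW_e2_e2_eq_zero (h₁ : b₁ = p) (h₂ : b₂ = p + e2) (h₃ : b₃ ≠ p + e2)
    (h₄ : b₄ = p + e2 + e2) : faceW q lam ω12 b₁ b₂ b₃ b₄ u v = 0 := by
  subst h₁ h₂ h₄
  simp [faceW, h₃, e1_ne_e2.symm]

lemma faceW_e1_e2_eq_zero_of_eq (huv : u = v) (h₁ : b₁ = p) (h₂ : b₂ = p + e1)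
    (h₃ : b₃ ≠ p + e1) (h₄ : b₄ = p + e1 + e2) : faceW q lam ω12 b₁ b₂ b₃ b₄ u v = 0 := by
  subst huv h₁ h₂ h₄
  simp [faceW, h₃, e1_ne_e2, e1_ne_e2.symm, brak_zero]

end FaceWeights

section Counting

variable {N : ℕ} {x : ℕ → ℕ} {k : ℕ}

lemma btmCount_succ_of_lt (hk : k < x (N + 1)) : btmCount (N + 1) x k = btmCount N x k := by
  rw [btmCount, btmCount, ← Finset.insert_Icc_right_eq_Icc_add_one (by omega),
    Finset.filter_insert, if_neg hk.not_ge]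

lemma btmCount_of_forall_le (hx : ∀ j ∈ Finset.Icc 1 N, x j ≤ k) : btmCount N x k = N := by
  rw [btmCount, Finset.filter_true_of_mem hx, Nat.card_Icc, Nat.add_sub_cancel]

end Counting

def HasBoundary (a : ℤ × ℤ) (N M : ℕ) (x : ℕ → ℕ) (s : Fin (N + 1) × Fin (M + 1) → ℤ × ℤ) :
    Prop :=
  (∀ k : Fin (M + 1), s (0, k) = a + ((k : ℕ) : ℤ) • e1) ∧
  (∀ i : Fin (N + 1), s (i, 0) = a + ((i : ℕ) : ℤ) • e1) ∧
  (∀ i : Fin (N + 1), s (i, Fin.last M) = a + (M : ℤ) • e1 + ((i : ℕ) : ℤ) • e2) ∧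
  (∀ k : Fin (M + 1), s (Fin.last N, k) =
      a + ((N : ℤ) + ((k : ℕ) : ℤ) - (btmCount N x (k : ℕ) : ℤ)) • e1 +
        (btmCount N x (k : ℕ) : ℤ) • e2)

def faceAt (q : ℝ) (lam ω12 : ℂ) (N : ℕ) {M : ℕ} (u v : ℕ → ℂ)
    (s : Fin (N + 1) × Fin (M + 1) → ℤ × ℤ) (i : Fin N) (k : Fin M) : ℂ :=
  faceW q lam ω12 (s (i.castSucc, k.castSucc)) (s (i.castSucc, k.succ))
    (s (i.succ, k.castSucc)) (s (i.succ, k.succ)) (u (N - (i : ℕ))) (v ((k : ℕ) + 1))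

def faceProd (q : ℝ) (lam ω12 : ℂ) (N M : ℕ) (u v : ℕ → ℂ)
    (s : Fin (N + 1) × Fin (M + 1) → ℤ × ℤ) : ℂ :=
  ∏ i : Fin N, ∏ k : Fin M, faceAt q lam ω12 N u v s i k

open scoped Classical in
lemma partW_eq_tsum (q : ℝ) (lam ω12 : ℂ) (M N : ℕ) (u v : ℕ → ℂ) (x : ℕ → ℕ) (a : ℤ × ℤ) :
    partW q lam ω12 M N u v x a =
      ∑' s, if HasBoundary a N M x s then faceProd q lam ω12 N M u v s else 0 := by
  unfold partW HasBoundary faceProd faceAt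
  exact tsum_congr fun s => by congr

lemma faceAt_ne_zero_of_faceProd_ne_zero {q : ℝ} {lam ω12 : ℂ} {N M : ℕ} {u v : ℕ → ℂ}
    {s : Fin (N + 1) × Fin (M + 1) → ℤ × ℤ} (h : faceProd q lam ω12 N M u v s ≠ 0)
    (i : Fin N) (k : Fin M) : faceAt q lam ω12 N u v s i k ≠ 0 :=
  Finset.prod_ne_zero_iff.mp (Finset.prod_ne_zero_iff.mp h i (Finset.mem_univ _)) k
    (Finset.mem_univ _)

section Hook

variable {n m : ℕ}

/-- Surrounds `t` by the frozen top row and right column (the hook); the corner of `t`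
becomes `a + e1`. -/
def hookExtend (a : ℤ × ℤ) (t : Fin (n + 1) × Fin (m + 1) → ℤ × ℤ) :
    Fin (n + 2) × Fin (m + 2) → ℤ × ℤ := fun p =>
  Fin.cases (a + ((p.2 : ℕ) : ℤ) • e1)
    (fun i => Fin.lastCases (a + ((m + 1 : ℕ) : ℤ) • e1 + (((i : ℕ) + 1 : ℕ) : ℤ) • e2)
      (fun k => t (i, k)) p.2) p.1

def hookRestrict (s : Fin (n + 2) × Fin (m + 2) → ℤ × ℤ) : Fin (n + 1) × Fin (m + 1) → ℤ × ℤ :=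
  fun p => s (p.1.succ, p.2.castSucc)

variable (a : ℤ × ℤ) (t : Fin (n + 1) × Fin (m + 1) → ℤ × ℤ)

@[simp] lemma hookExtend_zero (k : Fin (m + 2)) :
    hookExtend a t (0, k) = a + ((k : ℕ) : ℤ) • e1 :=
  rfl

@[simp] lemma hookExtend_succ_castSucc (i : Fin (n + 1)) (k : Fin (m + 1)) :
    hookExtend a t (i.succ, k.castSucc) = t (i, k) := by
  simp [hookExtend]

@[simp] lemma hookExtend_succ_last (i : Fin (n + 1)) :
    hookExtend a t (i.succ, Fin.last (m + 1)) =
      a + ((m + 1 : ℕ) : ℤ) • e1 + (((i : ℕ) + 1 : ℕ) : ℤ) • e2 := by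
  simp [hookExtend]

lemma hookRestrict_hookExtend : hookRestrict (hookExtend a t) = t := by
  funext p
  simp [hookRestrict]

lemma hookExtend_injective : Function.Injective (hookExtend (n := n) (m := m) a) :=
  Function.LeftInverse.injective (hookRestrict_hookExtend a)

end Hook

section Boundary

variable {n m : ℕ} {x : ℕ → ℕ} {a : ℤ × ℤ}

lemma hasBoundary_hookExtend (hxle : ∀ j ∈ Finset.Icc 1 (n + 1), x j ≤ m + 1)
    (hxN : x (n + 1) = m + 1) {t : Fin (n + 1) × Fin (m + 1) → ℤ × ℤ}
    (ht : HasBoundary (a + e1) n m x t) : HasBoundary a (n + 1) (m + 1) x (hookExtend a t) := by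
  obtain ⟨-, hleft, -, hbot⟩ := ht
  refine ⟨hookExtend_zero a t, fun i => ?_, fun i => ?_, fun k => ?_⟩
  · cases i using Fin.cases with
    | zero => simp
    | succ i =>
      rw [← Fin.castSucc_zero, hookExtend_succ_castSucc, hleft, Fin.val_succ]
      push_cast
      module
  · cases i using Fin.cases with
    | zero => simp
    | succ i => simp
  · cases k using Fin.lastCases with
    | last =>
      rw [← Fin.succ_last, hookExtend_succ_last, Fin.val_last, Fin.val_last,
        btmCount_of_forall_le hxle]
      push_cast
      module
    | cast k =>
      rw [← Fin.succ_last, hookExtend_succ_castSucc, hbot, Fin.val_castSucc,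
        btmCount_succ_of_lt (by omega)]
      push_cast
      module

end Boundary

section Freezing

variable {q : ℝ} {lam ω12 : ℂ} {n m : ℕ} {u v : ℕ → ℂ} {x : ℕ → ℕ} {a : ℤ × ℤ}
  {s : Fin (n + 2) × Fin (m + 2) → ℤ × ℤ}

lemma corner_eq_of_faceProd_ne_zero (hs : HasBoundary a (n + 1) (m + 1) x s)
    (hv : v (m + 1) = u (n + 1)) (hP : faceProd q lam ω12 (n + 1) (m + 1) u v s ≠ 0) :
    s ((0 : Fin (n + 1)).succ, (Fin.last m).castSucc) = a + e1 + (m : ℤ) • e1 := by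
  obtain ⟨htop, -, hright, -⟩ := hs
  by_contra hc
  refine faceAt_ne_zero_of_faceProd_ne_zero hP 0 (Fin.last m)
    (faceW_e1_e2_eq_zero_of_eq (p := a + (m : ℤ) • e1) (by simpa using hv.symm) ?_ ?_ ?_ ?_)
  · simp [htop]
  · rw [Fin.castSucc_zero, Fin.succ_last, htop, Fin.val_last]
    push_cast
    module
  · exact fun h => hc (h.trans (by module))
  · rw [Fin.succ_last, hright]
    simp only [Fin.val_succ, Fin.val_zero]
    push_cast
    module

lemma topRow_eq_of_faceProd_ne_zero (hs : HasBoundary a (n + 1) (m + 1) x s)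
    (hv : v (m + 1) = u (n + 1)) (hP : faceProd q lam ω12 (n + 1) (m + 1) u v s ≠ 0)
    (k : Fin (m + 1)) :
    s ((0 : Fin (n + 1)).succ, k.castSucc) = a + e1 + ((k : ℕ) : ℤ) • e1 := by
  induction k using Fin.reverseInduction with
  | last => simpa using corner_eq_of_faceProd_ne_zero hs hv hP
  | cast k ih =>
    by_contra hc
    refine faceAt_ne_zero_of_faceProd_ne_zero hP 0 k.castSucc
      (faceW_e1_e1_eq_zero (p := a + ((k : ℕ) : ℤ) • e1) ?_ ?_ ?_ ?_)
    · simp [hs.1]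
    · simp only [Fin.castSucc_zero, hs.1, Fin.val_succ, Fin.val_castSucc]
      push_cast
      module
    · exact fun h => hc (h.trans (by simp only [Fin.val_castSucc]; module))
    · rw [Fin.succ_castSucc, ih, Fin.val_succ]
      push_cast
      module

lemma rightColumn_eq_of_faceProd_ne_zero (hs : HasBoundary a (n + 1) (m + 1) x s)
    (hv : v (m + 1) = u (n + 1)) (hP : faceProd q lam ω12 (n + 1) (m + 1) u v s ≠ 0)
    (i : Fin (n + 1)) :
    s (i.succ, (Fin.last m).castSucc) = a + e1 + (m : ℤ) • e1 + ((i : ℕ) : ℤ) • e2 := by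
  induction i using Fin.induction with
  | zero => simpa using corner_eq_of_faceProd_ne_zero hs hv hP
  | succ i ih =>
    by_contra hc
    refine faceAt_ne_zero_of_faceProd_ne_zero hP i.succ (Fin.last m)
      (faceW_e2_e2_eq_zero (p := a + e1 + (m : ℤ) • e1 + ((i : ℕ) : ℤ) • e2) ?_ ?_ ?_ ?_)
    · rw [← Fin.succ_castSucc, ih, Fin.val_castSucc]
    · rw [Fin.succ_last, hs.2.2.1, Fin.val_castSucc, Fin.val_succ]
      push_cast
      module
    · exact fun h => hc (h.trans (by simp only [Fin.val_succ]; push_cast; module))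
    · rw [Fin.succ_last, hs.2.2.1, Fin.val_succ, Fin.val_succ]
      push_cast
      module

lemma hasBoundary_hookRestrict (hxN : x (n + 1) = m + 1)
    (hs : HasBoundary a (n + 1) (m + 1) x s) (hv : v (m + 1) = u (n + 1))
    (hP : faceProd q lam ω12 (n + 1) (m + 1) u v s ≠ 0) :
    HasBoundary (a + e1) n m x (hookRestrict s) := by
  refine ⟨topRow_eq_of_faceProd_ne_zero hs hv hP, fun i => ?_,
    rightColumn_eq_of_faceProd_ne_zero hs hv hP, fun k => ?_⟩
  · rw [hookRestrict, Fin.castSucc_zero, hs.2.1, Fin.val_succ]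
    push_cast
    module
  · rw [hookRestrict, Fin.succ_last, hs.2.2.2, Fin.val_castSucc,
      btmCount_succ_of_lt (by omega)]
    push_cast
    module

lemma hookExtend_hookRestrict (hs : HasBoundary a (n + 1) (m + 1) x s) :
    hookExtend a (hookRestrict s) = s := by
  funext ⟨i, k⟩
  cases i using Fin.cases with
  | zero => rw [hookExtend_zero, hs.1]
  | succ i =>
    cases k using Fin.lastCases with
    | last => rw [hookExtend_succ_last, hs.2.2.1, Fin.val_succ]
    | cast k => rw [hookExtend_succ_castSucc, hookRestrict]

end Freezing

lemma prod_Icc_one_eq_prod_fin {M : Type*} [CommMonoid M] (f : ℕ → M) (n : ℕ) :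
    ∏ j ∈ Finset.Icc 1 n, f j = ∏ k : Fin n, f (k + 1) := by
  rw [Fin.prod_univ_eq_prod_range (fun k => f (k + 1)), ← Finset.Ico_add_one_right_eq_Icc,
    Finset.prod_Ico_eq_prod_range, add_tsub_cancel_right]
  simp only [add_comm]

lemma prod_fin_sub_eq_prod_fin_succ {M : Type*} [CommMonoid M] (f : ℕ → M) (n : ℕ) :
    ∏ k : Fin n, f (n - k) = ∏ k : Fin n, f (k + 1) :=
  Fintype.prod_equiv Fin.revPerm _ _ fun k => by
    rw [Fin.revPerm_apply, Fin.val_rev]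
    congr 1
    omega

section Weight

variable {q : ℝ} {lam ω12 : ℂ} {n m : ℕ} {u v : ℕ → ℂ} {x : ℕ → ℕ} {a : ℤ × ℤ}
  {t : Fin (n + 1) × Fin (m + 1) → ℤ × ℤ}

lemma faceAt_hookExtend_top (ht : HasBoundary (a + e1) n m x t) (k : Fin m) :
    faceAt q lam ω12 (n + 1) u (Function.update v (m + 1) (u (n + 1))) (hookExtend a t) 0
        k.castSucc =
      brak q lam (1 + u (n + 1) - v (k + 1)) / brak q lam 1 := by
  rw [faceAt, faceW_e1_e1 (p := a + ((k : ℕ) : ℤ) • e1), Fin.val_castSucc,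
    Function.update_of_ne (by omega), Fin.val_zero, Nat.sub_zero, add_sub_assoc]
  · simp
  · simp only [Fin.castSucc_zero, hookExtend_zero, Fin.val_succ, Fin.val_castSucc]
    push_cast
    module
  · simp only [hookExtend_succ_castSucc, ht.1, Fin.val_castSucc]
    module
  · simp only [Fin.succ_castSucc, hookExtend_succ_castSucc, ht.1, Fin.val_succ]
    push_cast
    module

lemma faceAt_hookExtend_corner (hA : brak q lam (aSc ω12 (a + (m : ℤ) • e1)) ≠ 0)
    (ht : HasBoundary (a + e1) n m x t) :
    faceAt q lam ω12 (n + 1) u (Function.update v (m + 1) (u (n + 1))) (hookExtend a t) 0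
        (Fin.last m) = 1 := by
  refine faceW_e1_e2_of_eq hA (by simp) ?_ ?_ ?_ ?_
  · simp
  · simp only [Fin.castSucc_zero, hookExtend_zero, Fin.succ_last, Fin.val_last]
    push_cast
    module
  · simp only [hookExtend_succ_castSucc, ht.1, Fin.val_last]
    module
  · simp only [Fin.succ_last, hookExtend_succ_last, Fin.val_zero]
    push_cast
    module

lemma faceAt_hookExtend_inner (i : Fin n) (k : Fin m) :
    faceAt q lam ω12 (n + 1) u (Function.update v (m + 1) (u (n + 1))) (hookExtend a t) i.succ
        k.castSucc =
      faceAt q lam ω12 n u v t i k := by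
  simp only [faceAt, Fin.castSucc_succ i, Fin.succ_castSucc k, hookExtend_succ_castSucc,
    Fin.val_succ, Fin.val_castSucc, Nat.add_sub_add_right]
  rw [Function.update_of_ne (by omega)]

lemma faceAt_hookExtend_right (ht : HasBoundary (a + e1) n m x t) (i : Fin n) :
    faceAt q lam ω12 (n + 1) u (Function.update v (m + 1) (u (n + 1))) (hookExtend a t) i.succ
        (Fin.last m) =
      brak q lam (1 - u (n - i) + u (n + 1)) / brak q lam 1 := by
  rw [faceAt, faceW_e2_e2 (p := a + e1 + (m : ℤ) • e1 + ((i : ℕ) : ℤ) • e2), Fin.val_last,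
    Function.update_self, Fin.val_succ, Nat.add_sub_add_right]
  · congr 2
    ring
  · rw [Fin.castSucc_succ, hookExtend_succ_castSucc, ht.2.2.1, Fin.val_castSucc]
  · rw [Fin.castSucc_succ, Fin.succ_last, hookExtend_succ_last, Fin.val_castSucc]
    push_cast
    module
  · rw [hookExtend_succ_castSucc, ht.2.2.1, Fin.val_succ]
    push_cast
    module
  · rw [Fin.succ_last, hookExtend_succ_last, Fin.val_succ]
    push_cast
    module

lemma faceProd_hookExtend (hA : brak q lam (aSc ω12 (a + (m : ℤ) • e1)) ≠ 0)
    (ht : HasBoundary (a + e1) n m x t) :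
    faceProd q lam ω12 (n + 1) (m + 1) u (Function.update v (m + 1) (u (n + 1)))
        (hookExtend a t) =
      (∏ j ∈ Finset.Icc 1 n, brak q lam (1 - u j + u (n + 1)) / brak q lam 1) *
      (∏ j ∈ Finset.Icc 1 m, brak q lam (1 + u (n + 1) - v j) / brak q lam 1) *
      faceProd q lam ω12 n m u v t := by
  rw [faceProd, faceProd, Fin.prod_univ_succ, Fin.prod_univ_castSucc]
  simp only [Fin.prod_univ_castSucc (n := m), faceAt_hookExtend_top ht,
    faceAt_hookExtend_corner hA ht, faceAt_hookExtend_inner, faceAt_hookExtend_right ht,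
    Finset.prod_mul_distrib, prod_Icc_one_eq_prod_fin, mul_one]
  rw [prod_fin_sub_eq_prod_fin_succ (fun j => brak q lam (1 - u j + u (n + 1)) / brak q lam 1)]
  ring

end Weight

theorem partW_succ_update_eq {q : ℝ} {lam ω12 : ℂ} {n m : ℕ} (u v : ℕ → ℂ) {x : ℕ → ℕ}
    (a : ℤ × ℤ) (hA : ∀ b : ℤ × ℤ, brak q lam (aSc ω12 b) ≠ 0)
    (hxle : ∀ j ∈ Finset.Icc 1 (n + 1), x j ≤ m + 1) (hxN : x (n + 1) = m + 1) :
    partW q lam ω12 (m + 1) (n + 1) u (Function.update v (m + 1) (u (n + 1))) x a =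
      (∏ j ∈ Finset.Icc 1 n, brak q lam (1 - u j + u (n + 1)) / brak q lam 1) *
      (∏ j ∈ Finset.Icc 1 m, brak q lam (1 + u (n + 1) - v j) / brak q lam 1) *
      partW q lam ω12 m n u v x (a + e1) := by
  classical
  rw [partW_eq_tsum, partW_eq_tsum, ← tsum_mul_left,
    ← (hookExtend_injective a).tsum_eq fun s hs =>
      ⟨hookRestrict s, hookExtend_hookRestrict (ite_ne_right_iff.mp hs).1⟩]
  refine tsum_congr fun t => ?_
  by_cases ht : HasBoundary (a + e1) n m x t
  · rw [if_pos (hasBoundary_hookExtend hxle hxN ht), if_pos ht, faceProd_hookExtend (hA _) ht]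
  · rw [if_neg ht, mul_zero, ite_eq_right_iff]
    intro hs
    by_contra hP
    exact ht (hookRestrict_hookExtend a t ▸
      hasBoundary_hookRestrict hxN hs (Function.update_self _ _ _) hP)

theorem statement7_general (q : ℝ) (lam : ℂ)
    (ω12 : ℂ) (M N : ℕ) (hN : 1 ≤ N) (hNM : N ≤ M)
    (u v : ℕ → ℂ) (x : ℕ → ℕ)
    (hxmono : ∀ j k, 1 ≤ j → j < k → k ≤ N → x j < x k)
    (hxN : x N = M) (a : ℤ × ℤ)
    (hbrA : ∀ b : ℤ × ℤ, brak q lam (aSc ω12 b) ≠ 0) :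
    partW q lam ω12 M N u (Function.update v M (u N)) x a =
      (∏ j ∈ Finset.Icc 1 (N - 1), brak q lam (1 - u j + u N) / brak q lam 1) *
      (∏ j ∈ Finset.Icc 1 (M - 1), brak q lam (1 + u N - v j) / brak q lam 1) *
      partW q lam ω12 (M - 1) (N - 1) u v x (a + e1) := by
  obtain ⟨n, rfl⟩ : ∃ n, N = n + 1 := ⟨N - 1, by omega⟩
  obtain ⟨m, rfl⟩ : ∃ m, M = m + 1 := ⟨M - 1, by omega⟩
  have hxle : ∀ j ∈ Finset.Icc 1 (n + 1), x j ≤ m + 1 := fun j hj => by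
    obtain ⟨hj1, hj2⟩ := Finset.mem_Icc.mp hj
    rcases hj2.lt_or_eq with hlt | rfl
    · exact hxN ▸ (hxmono j (n + 1) hj1 hlt le_rfl).le
    · exact hxN.le
  simpa only [Nat.add_sub_cancel] using partW_succ_update_eq u v a hbrA hxle hxN

/-- if `x_N = M`, the partition function evaluated at `v_M = u_N` satisfies
`W_{M,N}(…)|_{v_M=u_N} = ∏_{j=1}^{N-1}([1-u_j+u_N]/[1]) ∏_{j=1}^{M-1}([1+u_N-v_j]/[1])
  · W_{M-1,N-1}(u₁,…,u_{N-1}|v₁,…,v_{M-1}|x₁,…,x_{N-1}|a₁₂+1)`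
(the shift `a₁₂ ↦ a₁₂ + 1` is realized by the corner state vector `a⃗ + ê₁`). -/
theorem statement7 (q : ℝ) (hq0 : 0 < q) (hq1 : q < 1) (lam : ℂ) (hlam : lam ≠ 0)
    (ω12 : ℂ) (M N : ℕ) (hN : 1 ≤ N) (hNM : N ≤ M)
    (u v : ℕ → ℂ) (x : ℕ → ℕ)
    (hx1 : 1 ≤ x 1) (hxmono : ∀ j k, 1 ≤ j → j < k → k ≤ N → x j < x k)
    (hxN : x N = M) (a : ℤ × ℤ)
    (hbr1 : brak q lam 1 ≠ 0)
    (hbrA : ∀ b : ℤ × ℤ, brak q lam (aSc ω12 b) ≠ 0)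
    (hbrA' : ∀ b : ℤ × ℤ, brak q lam (-aSc ω12 b) ≠ 0) :
    partW q lam ω12 M N u (Function.update v M (u N)) x a =
      (∏ j ∈ Finset.Icc 1 (N - 1), brak q lam (1 - u j + u N) / brak q lam 1) *
      (∏ j ∈ Finset.Icc 1 (M - 1), brak q lam (1 + u N - v j) / brak q lam 1) *
      partW q lam ω12 (M - 1) (N - 1) u v x (a + e1) :=
  statement7_general q lam ω12 M N hN hNM u v x hxmono hxN a hbrA

end
end

section
/- For each j = 0, 1, …, N−1, the one-column partition function W̃_j, regarded as a function of v_M, satisfies the quasi-periodicities W̃_j(u₁,…,u_N|v_M + 2K₁/λ|a₁₂) = (-1)^N W̃_j(u₁,…,u_N|v_M|a₁₂) and W̃_j(u₁,…,u_N|v_M + 2iK₂/λ|a₁₂) = (-q^{-1})^N exp( -(iπλ/K₁)( N v_M − Σ_{j=1}^N u_j + a₁₂ + N + M − 2 ) ) W̃_j(u₁,…,u_N|v_M|a₁₂); in particular these quasi-periodicity factors are independent of j. -/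
/-!
With `s = exp (iπu / 2K₁)` and the q-Pochhammer symbol `(a; p)_∞ = ∏ₙ (1 - a pⁿ)`, the product
formula for `H` reads `H(u) = c_q · (s - s⁻¹) (q²s²; q²)_∞ (q²/s²; q²)_∞`. The shift
`u ↦ u + 2K₁` only changes the sign of `sin (πu / 2K₁)`, while `u ↦ u + 2iK₂` is `s ↦ q s`, and
peeling the first factor off each of the two products gives `H(u + 2iK₂) = -q⁻¹ s⁻² H(u)`.

Every bracket `[w]` of `W̃_j` has `w = ±v_M + const`, so shifting `v_M` by a quasi-period `t`
multiplies it by `c · exp (± d w)`; the sign `-` follows from `+` because `c² = exp (d t)`.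
Collecting the `N` factors, the exponents add up to `N v_M - Σ u_k + a₁₂ + N + M - 2` for
every `j`.
-/

open Complex

noncomputable section

/-- The closed form of the one-column partition function `W̃_j(u₁,…,u_N|v_M|a₁₂)`,
with `a₂₁ = -a₁₂`. -/
def oneColClosed (q : ℝ) (lam : ℂ) (M N : ℕ) (u : ℕ → ℂ) (a12 : ℂ) (j : ℕ)
    (vM : ℂ) : ℂ :=
  brak q lam (a12 + (M : ℂ) - 1 + (j : ℂ) - u (N - j) + vM) /
    brak q lam (a12 + (M : ℂ) - 1 + (j : ℂ)) *
  (∏ k ∈ Finset.Icc (N - j + 1) N,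
    brak q lam (u k - vM) * brak q lam (-a12 - (M : ℂ) + (k : ℂ) - (N : ℂ)) /
      (brak q lam 1 * brak q lam (-a12 - (M : ℂ) + 1 + (k : ℂ) - (N : ℂ)))) *
  ∏ k ∈ Finset.Icc 1 (N - j - 1), brak q lam (1 - u k + vM) / brak q lam 1

lemma Kone_pos {q : ℝ} (hq0 : 0 < q) (hq1 : q < 1) : 0 < Kone q := by
  have hlog_summable (c : ℕ) (σ : ℝ) :
      Summable fun n : ℕ => Real.log (1 + σ * q ^ (2 * n + c)) := by
    refine Real.summable_log_one_add_of_summable (((summable_geometric_of_lt_one (by positivity)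
      (by nlinarith : q ^ 2 < 1)).mul_left (σ * q ^ c)).congr fun n => ?_)
    rw [mul_assoc, ← pow_mul, ← pow_add, add_comm]
  have hlt (n c : ℕ) : q ^ (2 * n + c + 1) < 1 := pow_lt_one₀ hq0.le hq1 (by omega)
  have hpos (n c : ℕ) : 0 < q ^ (2 * n + c + 1) := by positivity
  set f : ℕ → ℝ := fun n => ((1 + q ^ (2 * n + 1)) / (1 - q ^ (2 * n + 1)) *
      ((1 - q ^ (2 * n + 2)) / (1 + q ^ (2 * n + 2)))) ^ 2
  have hf_pos (n : ℕ) : 0 < f n := by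
    have := hlt n 0; have := hlt n 1; have := hpos n 0; have := hpos n 1
    exact pow_pos (mul_pos (div_pos (by linarith) (by linarith))
      (div_pos (by linarith) (by linarith))) 2
  have hf_log : Summable fun n => Real.log (f n) := by
    refine ((((hlog_summable 1 1).sub (hlog_summable 1 (-1))).add
      ((hlog_summable 2 (-1)).sub (hlog_summable 2 1))).mul_left 2).congr fun n => ?_
    have := hlt n 0; have := hlt n 1; have := hpos n 0; have := hpos n 1
    simp only [f, one_mul, neg_one_mul, ← sub_eq_add_neg]
    rw [Real.log_pow, Real.log_mul (by positivity) (by positivity),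
      Real.log_div (by positivity) (by linarith), Real.log_div (by linarith) (by positivity)]
    push_cast
    ring
  rw [Kone, ← Real.rexp_tsum_eq_tprod hf_pos hf_log]
  positivity

def qPochhammer (a p : ℂ) : ℂ := ∏' n : ℕ, (1 - a * p ^ n)

lemma multipliable_one_sub_mul_pow {p : ℂ} (hp : ‖p‖ < 1) (a : ℂ) :
    Multipliable fun n : ℕ => 1 - a * p ^ n := by
  simpa only [sub_eq_add_neg] using
    Complex.multipliable_one_add_of_summable
      ((summable_geometric_of_norm_lt_one hp).mul_left a).neg

lemma qPochhammer_eq_one_sub_mul {p : ℂ} (hp : ‖p‖ < 1) (a : ℂ) :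
    qPochhammer a p = (1 - a) * qPochhammer (a * p) p := by
  have hshift : (fun n : ℕ => 1 - a * p ^ (n + 1)) = fun n => 1 - a * p * p ^ n := by
    ext n; ring
  rw [qPochhammer, tprod_eq_zero_mul' (hshift ▸ multipliable_one_sub_mul_pow hp (a * p)),
    hshift, pow_zero, mul_one, qPochhammer]

def oddTheta (q s : ℂ) : ℂ :=
  (s - s⁻¹) * qPochhammer (q ^ 2 * s ^ 2) (q ^ 2) * qPochhammer (q ^ 2 / s ^ 2) (q ^ 2)

lemma oddTheta_q_mul {q : ℂ} (hq : ‖q‖ < 1) (hq0 : q ≠ 0) {s : ℂ} (hs : s ≠ 0) :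
    oddTheta q (q * s) = -(q * s ^ 2)⁻¹ * oddTheta q s := by
  have hq2 : ‖q ^ 2‖ < 1 := by
    rw [norm_pow]; exact pow_lt_one₀ (norm_nonneg q) hq two_ne_zero
  have hup := qPochhammer_eq_one_sub_mul hq2 (q ^ 2 * s ^ 2)
  have hdown := qPochhammer_eq_one_sub_mul hq2 (1 / s ^ 2)
  rw [one_div_mul_eq_div] at hdown
  rw [oddTheta, oddTheta, show q ^ 2 / (q * s) ^ 2 = 1 / s ^ 2 by field_simp, hdown, hup]
  field_simp
  ring

lemma theta_eq_oddTheta {q : ℝ} (hq : |q| < 1) (u : ℂ) :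
    theta q u = (q : ℂ) ^ (1 / 4 : ℂ) * qPochhammer ((q : ℂ) ^ 2) ((q : ℂ) ^ 2) / I *
      oddTheta q (cexp (Real.pi * u / (2 * Kone q) * I)) := by
  set y : ℂ := Real.pi * u / (2 * Kone q)
  set s := cexp (y * I)
  have hs : s ≠ 0 := Complex.exp_ne_zero _
  have hsinv : cexp (-y * I) = s⁻¹ := by rw [neg_mul, Complex.exp_neg]
  have hsq : cexp (2 * y * I) = s ^ 2 := by rw [← Complex.exp_nat_mul]; push_cast; ring_nf
  have hsq' : cexp (-(2 * y) * I) = (s ^ 2)⁻¹ := by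
    rw [neg_mul, Complex.exp_neg, hsq]
  have hx : (Real.pi * u / Kone q : ℂ) = 2 * y := by ring
  have hp : ‖(q : ℂ) ^ 2‖ < 1 := by
    rw [norm_pow, Complex.norm_real, Real.norm_eq_abs]
    exact pow_lt_one₀ (abs_nonneg q) hq two_ne_zero
  have hfactor : ∀ n : ℕ,
      (1 - 2 * (q : ℂ) ^ (2 * n + 2) * Complex.cos (2 * y) + (q : ℂ) ^ (4 * n + 4)) *
        (1 - (q : ℂ) ^ (2 * n + 2)) =
      (1 - (q : ℂ) ^ 2 * s ^ 2 * ((q : ℂ) ^ 2) ^ n) *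
        (1 - (q : ℂ) ^ 2 / s ^ 2 * ((q : ℂ) ^ 2) ^ n) * (1 - (q : ℂ) ^ 2 * ((q : ℂ) ^ 2) ^ n) := by
    intro n
    rw [Complex.cos, hsq, hsq', ← pow_mul, ← pow_add,
      show 4 * n + 4 = 2 * (2 * n + 2) by ring, pow_mul, add_comm 2 (2 * n)]
    field_simp
    ring
  have hm (a : ℂ) := multipliable_one_sub_mul_pow hp a
  rw [theta, hx, tprod_congr hfactor, ((hm _).mul (hm _)).tprod_mul (hm _),
    (hm _).tprod_mul (hm _), Complex.sin, hsinv, oddTheta, Complex.div_I]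
  simp only [← qPochhammer.eq_1]
  ring

lemma theta_add_two_Kone {q : ℝ} (hK : Kone q ≠ 0) (u : ℂ) :
    theta q (u + 2 * Kone q) = -theta q u := by
  have hK' : (Kone q : ℂ) ≠ 0 := by exact_mod_cast hK
  have hsin : (Real.pi * (u + 2 * Kone q) / (2 * Kone q) : ℂ) =
      Real.pi * u / (2 * Kone q) + Real.pi := by
    field_simp
  have hcos : (Real.pi * (u + 2 * Kone q) / Kone q : ℂ) = Real.pi * u / Kone q + 2 * Real.pi := by
    field_simp
  simp only [theta, hsin, hcos, Complex.sin_add_pi, Complex.cos_add_two_pi]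
  ring

lemma theta_add_two_I_Ktwo {q : ℝ} (hq0 : 0 < q) (hq1 : q < 1) (u : ℂ) :
    theta q (u + 2 * I * Ktwo q) =
      -(q : ℂ)⁻¹ * cexp (-(I * Real.pi / Kone q) * u) * theta q u := by
  have hq : |q| < 1 := abs_lt.2 ⟨by linarith, hq1⟩
  have hK : (Kone q : ℂ) ≠ 0 := by exact_mod_cast (Kone_pos hq0 hq1).ne'
  have hπ : (Real.pi : ℂ) ≠ 0 := by exact_mod_cast Real.pi_ne_zero
  set s := cexp (Real.pi * u / (2 * Kone q) * I)
  have hshift : cexp (Real.pi * (u + 2 * I * Ktwo q) / (2 * Kone q) * I) = q * s := by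
    have harg : (Real.pi * (u + 2 * I * Ktwo q) / (2 * Kone q) * I : ℂ) =
        Real.log q + Real.pi * u / (2 * Kone q) * I := by
      simp only [Ktwo, Complex.ofReal_mul, Complex.ofReal_neg, Complex.ofReal_div]
      field_simp
      linear_combination (-(2 * Kone q * Real.log q) : ℂ) * I_sq
    rw [harg, Complex.exp_add, ← Complex.ofReal_exp, Real.exp_log hq0]
  have hs2 : cexp (-(I * Real.pi / Kone q) * u) = (s ^ 2)⁻¹ := by
    rw [← Complex.exp_nat_mul, ← Complex.exp_neg]
    congr 1
    field_simp
    push_cast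
    ring
  rw [theta_eq_oddTheta hq, theta_eq_oddTheta hq, hshift,
    oddTheta_q_mul (by simpa using hq) (by exact_mod_cast hq0.ne') (Complex.exp_ne_zero _), hs2,
    mul_inv]
  ring

lemma brak_add_two_Kone_div {q : ℝ} (hq0 : 0 < q) (hq1 : q < 1) {lam : ℂ} (hlam : lam ≠ 0)
    (w : ℂ) : brak q lam (w + 2 * Kone q / lam) = -brak q lam w := by
  rw [brak, brak, mul_add, mul_div_cancel₀ _ hlam, theta_add_two_Kone (Kone_pos hq0 hq1).ne']

lemma brak_add_two_I_Ktwo_div {q : ℝ} (hq0 : 0 < q) (hq1 : q < 1) {lam : ℂ} (hlam : lam ≠ 0)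
    (w : ℂ) : brak q lam (w + 2 * I * Ktwo q / lam) =
      -(q : ℂ)⁻¹ * cexp (-(I * Real.pi * lam / Kone q) * w) * brak q lam w := by
  rw [brak, brak, mul_add, mul_div_cancel₀ _ hlam, theta_add_two_I_Ktwo hq0 hq1]
  ring_nf

lemma apply_sub_eq_of_apply_add_eq {f : ℂ → ℂ} {t c d : ℂ}
    (h : ∀ w, f (w + t) = c * cexp (d * w) * f w) (hc : c ^ 2 = cexp (d * t)) (w : ℂ) :
    f (w - t) = c * cexp (-d * w) * f w := by
  have hw := h (w - t)
  rw [sub_add_cancel] at hw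
  calc f (w - t) = cexp (d * t) * cexp (-(d * t)) * f (w - t) := by
        rw [← Complex.exp_add, add_neg_cancel, Complex.exp_zero, one_mul]
    _ = c * cexp (-d * w) * (c * cexp (d * (w - t)) * f (w - t)) := by
        rw [← hc, show -(d * t) = -d * w + d * (w - t) by ring, Complex.exp_add]
        ring
    _ = c * cexp (-d * w) * f w := by rw [hw]

lemma Finset.sum_Icc_one_split {M : Type*} [AddCommMonoid M] (f : ℕ → M) {m N : ℕ}
    (h1 : 1 ≤ m) (hm : m ≤ N) :
    ∑ k ∈ Icc 1 N, f k = ∑ k ∈ Icc 1 (m - 1), f k + f m + ∑ k ∈ Icc (m + 1) N, f k := by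
  obtain ⟨m, rfl⟩ : ∃ m', m = m' + 1 := ⟨m - 1, by omega⟩
  have hIoc (a b : ℕ) : Icc (a + 1) b = Ioc a b := Icc_add_one_left_eq_Ioc a b
  rw [Nat.add_sub_cancel, hIoc 0, hIoc 0, hIoc, ← sum_Ioc_consecutive f (Nat.zero_le _) hm,
    sum_Ioc_succ_top (Nat.zero_le m)]

lemma Finset.prod_mul_cexp {ι : Type*} (s : Finset ι) (c d : ℂ) (g : ι → ℂ) :
    ∏ k ∈ s, c * cexp (d * g k) = c ^ s.card * cexp (d * ∑ k ∈ s, g k) := by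
  rw [prod_mul_distrib, prod_const, ← Complex.exp_sum, mul_sum]

open Finset in
lemma oneColClosed_add_of_brak_add {q : ℝ} {lam t c d : ℂ}
    (h : ∀ w, brak q lam (w + t) = c * cexp (d * w) * brak q lam w) (hc : c ^ 2 = cexp (d * t))
    (M : ℕ) {N : ℕ} (u : ℕ → ℂ) (a12 : ℂ) {j : ℕ} (hj : j < N) (vM : ℂ) :
    oneColClosed q lam M N u a12 j (vM + t) =
      c ^ N * cexp (d * (N * vM - ∑ k ∈ Icc 1 N, u k + a12 + N + M - 2)) *
        oneColClosed q lam M N u a12 j vM := by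
  have h' := apply_sub_eq_of_apply_add_eq h hc
  rw [oneColClosed, oneColClosed]
  set a : ℂ := a12 + M - 1 + j - u (N - j)
  have hmid : brak q lam (a + (vM + t)) = c * cexp (d * (a + vM)) * brak q lam (a + vM) := by
    rw [← add_assoc, h]
  have hupper : ∏ k ∈ Icc (N - j + 1) N,
        brak q lam (u k - (vM + t)) * brak q lam (-a12 - M + k - N) /
          (brak q lam 1 * brak q lam (-a12 - M + 1 + k - N)) =
      (∏ k ∈ Icc (N - j + 1) N, c * cexp (d * (vM - u k))) *
        ∏ k ∈ Icc (N - j + 1) N, brak q lam (u k - vM) * brak q lam (-a12 - M + k - N) /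
          (brak q lam 1 * brak q lam (-a12 - M + 1 + k - N)) := by
    rw [← prod_mul_distrib]
    refine prod_congr rfl fun k _ => ?_
    rw [sub_add_eq_sub_sub, h', show -d * (u k - vM) = d * (vM - u k) by ring]
    ring
  have hlower : ∏ k ∈ Icc 1 (N - j - 1), brak q lam (1 - u k + (vM + t)) / brak q lam 1 =
      (∏ k ∈ Icc 1 (N - j - 1), c * cexp (d * (1 - u k + vM))) *
        ∏ k ∈ Icc 1 (N - j - 1), brak q lam (1 - u k + vM) / brak q lam 1 := by
    rw [← prod_mul_distrib]
    refine prod_congr rfl fun k _ => ?_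
    rw [← add_assoc, h]
    ring
  have hcard_upper : #(Icc (N - j + 1) N) = j := by rw [Nat.card_Icc]; omega
  have hcard_lower : #(Icc 1 (N - j - 1)) = N - j - 1 := by rw [Nat.card_Icc]; omega
  have hpow : c ^ N = c * c ^ j * c ^ (N - j - 1) := by
    rw [← pow_succ', ← pow_add]; congr 1; omega
  have hexponent : a + vM + ∑ k ∈ Icc (N - j + 1) N, (vM - u k) +
      ∑ k ∈ Icc 1 (N - j - 1), (1 - u k + vM) =
      N * vM - ∑ k ∈ Icc 1 N, u k + a12 + N + M - 2 := by
    rw [sum_Icc_one_split u (m := N - j) (by omega) (by omega)]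
    simp only [sum_sub_distrib, sum_add_distrib, sum_const, hcard_upper, hcard_lower, nsmul_eq_mul]
    rw [Nat.cast_sub (by omega), Nat.cast_sub hj.le]
    simp only [a]
    ring
  rw [hmid, hupper, hlower, prod_mul_cexp, prod_mul_cexp, hcard_upper, hcard_lower, hpow,
    ← hexponent]
  simp only [mul_add, Complex.exp_add]
  ring

theorem statement11_general (q : ℝ) (hq0 : 0 < q) (hq1 : q < 1) (lam : ℂ) (hlam : lam ≠ 0)
    (M N : ℕ)
    (u : ℕ → ℂ) (a12 : ℂ)
    (j : ℕ) (hj : j < N) (vM : ℂ) :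
    oneColClosed q lam M N u a12 j (vM + 2 * (Kone q : ℂ) / lam) =
      (-1 : ℂ) ^ N * oneColClosed q lam M N u a12 j vM ∧
    oneColClosed q lam M N u a12 j (vM + 2 * Complex.I * (Ktwo q : ℂ) / lam) =
      (-(q : ℂ)⁻¹) ^ N *
        Complex.exp (-(Complex.I * (Real.pi : ℂ) * lam / (Kone q : ℂ)) *
          ((N : ℂ) * vM - (∑ j ∈ Finset.Icc 1 N, u j) + a12 + (N : ℂ) + (M : ℂ) - 2)) *
        oneColClosed q lam M N u a12 j vM := by
  constructor
  · have h (w : ℂ) : brak q lam (w + 2 * Kone q / lam) = -1 * cexp (0 * w) * brak q lam w := by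
      rw [brak_add_two_Kone_div hq0 hq1 hlam, zero_mul, Complex.exp_zero]
      ring
    simpa using oneColClosed_add_of_brak_add h (by simp) M u a12 hj vM
  · have hK : (Kone q : ℂ) ≠ 0 := by exact_mod_cast (Kone_pos hq0 hq1).ne'
    have hπ : (Real.pi : ℂ) ≠ 0 := by exact_mod_cast Real.pi_ne_zero
    have hexponent : -(I * Real.pi * lam / Kone q) * (2 * I * Ktwo q / lam) =
        ((Real.log ((q ^ 2)⁻¹) : ℝ) : ℂ) := by
      simp only [Ktwo, Real.log_inv, Real.log_pow, Complex.ofReal_mul, Complex.ofReal_neg,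
        Complex.ofReal_div]
      field_simp
      push_cast
      linear_combination (2 * Real.log q : ℂ) * I_sq
    have hc :
        (-(q : ℂ)⁻¹) ^ 2 = cexp (-(I * Real.pi * lam / Kone q) * (2 * I * Ktwo q / lam)) := by
      rw [hexponent, ← Complex.ofReal_exp, Real.exp_log (by positivity)]
      push_cast
      ring
    exact oneColClosed_add_of_brak_add (brak_add_two_I_Ktwo_div hq0 hq1 hlam) hc M u a12 hj vM

/-- for each `j = 0,1,…,N-1`, the one-column partition function `W̃_j`,
regarded as a function of `v_M`, satisfies the quasi-periodicities
`W̃_j(v_M + 2K₁/λ) = (-1)^N W̃_j(v_M)` and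
`W̃_j(v_M + 2iK₂/λ) = (-q⁻¹)^N exp(-(iπλ/K₁)(N v_M - Σ u_j + a₁₂ + N + M - 2)) W̃_j(v_M)`;
in particular the quasi-periodicity factors are independent of `j`. -/
theorem statement11 (q : ℝ) (hq0 : 0 < q) (hq1 : q < 1) (lam : ℂ) (hlam : lam ≠ 0)
    (M N : ℕ) (hN : 1 ≤ N) (hNM : N ≤ M)
    (u : ℕ → ℂ) (a12 : ℂ)
    (j : ℕ) (hj : j < N) (vM : ℂ) :
    oneColClosed q lam M N u a12 j (vM + 2 * (Kone q : ℂ) / lam) =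
      (-1 : ℂ) ^ N * oneColClosed q lam M N u a12 j vM ∧
    oneColClosed q lam M N u a12 j (vM + 2 * Complex.I * (Ktwo q : ℂ) / lam) =
      (-(q : ℂ)⁻¹) ^ N *
        Complex.exp (-(Complex.I * (Real.pi : ℂ) * lam / (Kone q : ℂ)) *
          ((N : ℂ) * vM - (∑ j ∈ Finset.Icc 1 N, u j) + a12 + (N : ℂ) + (M : ℂ) - 2)) *
        oneColClosed q lam M N u a12 j vM :=
  statement11_general q hq0 hq1 lam hlam M N u a12 j hj vM

end
end
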